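/- Let H and V be finite-dimensional complex inner product spaces, A : H → V a linear map, τ ∈ V nonzero, and w₀ := A⁺τ, assumed to have norm 1. Let T := ker A ⊕ span{w₀}, and let K ⊆ H be a subspace such that there exists h ∈ K with A h = τ. Then ‖P_{T ∩ K} w₀‖² = 1 / w₊, where w₊ := min{ ‖h‖² : h ∈ K, A h = τ } is the positive witness size and P_{T ∩ K} is the orthogonal projection onto T ∩ K. -/

import Mathlib

open scoped InnerProductSpace

open LinearMap

/-- The orthogonal projection onto a submodule, as an endomorphism of the ambient space. -/
noncomputable def projL {H : Type*} [NormedAddCommGroup H] [InnerProductSpace ℂ H]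
    (K : Submodule ℂ H) [K.HasOrthogonalProjection] : H →ₗ[ℂ] H :=
  K.subtype ∘ₗ (K.orthogonalProjectionOnto).toLinearMap

/-- The four Moore–Penrose equations: `B` is the Moore–Penrose pseudoinverse of `A`. -/
def IsMPInv {H W : Type*} [NormedAddCommGroup H] [InnerProductSpace ℂ H]
    [FiniteDimensional ℂ H] [NormedAddCommGroup W] [InnerProductSpace ℂ W]
    [FiniteDimensional ℂ W] (A : H →ₗ[ℂ] W) (B : W →ₗ[ℂ] H) : Prop :=
  A ∘ₗ B ∘ₗ A = A ∧ B ∘ₗ A ∘ₗ B = B ∧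
    adjoint (A ∘ₗ B) = A ∘ₗ B ∧ adjoint (B ∘ₗ A) = B ∘ₗ A

/-!
Let `s` be the witness in `K` orthogonal to `ker A ∩ K`; by Pythagoras it has the least norm,
so `w₊ = ‖s‖²`. Since `w₀ = A⁺τ` is a unit vector orthogonal to `ker A` with `A w₀ = τ = A s`,
every `x ∈ T ∩ K` has the form `x = y + ⟪w₀, x⟫ w₀` with `y ∈ ker A`, so `x - ⟪w₀, x⟫ s ∈ ker A ∩ K`
and hence `⟪s, x⟫ = ‖s‖² ⟪w₀, x⟫`. As `s ∈ T ∩ K`, this says `P_{T ∩ K} w₀ = s / ‖s‖²`,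
whose squared norm is `1 / ‖s‖²`.
-/

open Submodule

namespace IsMPInv

variable {H W : Type*} [NormedAddCommGroup H] [InnerProductSpace ℂ H] [FiniteDimensional ℂ H]
  [NormedAddCommGroup W] [InnerProductSpace ℂ W] [FiniteDimensional ℂ W]
  {A : H →ₗ[ℂ] W} {B : W →ₗ[ℂ] H}

theorem apply_apply_of_mem_range (hB : IsMPInv A B) {τ : W} (hτ : τ ∈ range A) :
    A (B τ) = τ := by
  obtain ⟨h, rfl⟩ := hτ
  exact LinearMap.congr_fun hB.1 h

theorem apply_mem_orthogonal_ker (hB : IsMPInv A B) (τ : W) : B τ ∈ (ker A)ᗮ := by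
  rw [mem_orthogonal']
  intro u hu
  have hfix : (B ∘ₗ A) (B τ) = B τ := LinearMap.congr_fun hB.2.1 τ
  calc ⟪B τ, u⟫_ℂ = ⟪(B ∘ₗ A) (B τ), u⟫_ℂ := by rw [hfix]
    _ = ⟪B τ, adjoint (B ∘ₗ A) u⟫_ℂ := (adjoint_inner_right _ _ _).symm
    _ = 0 := by rw [hB.2.2.2, LinearMap.comp_apply, mem_ker.1 hu, map_zero, inner_zero_right]

end IsMPInv

section

variable {𝕜 E F : Type*} [RCLike 𝕜] [NormedAddCommGroup E] [InnerProductSpace 𝕜 E]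
  [AddCommGroup F] [Module 𝕜 F]

theorem sub_inner_smul_mem_of_mem_sup_span {N : Submodule 𝕜 E} {w x : E} (hwN : w ∈ Nᗮ)
    (hw : ‖w‖ = 1) (hx : x ∈ N ⊔ span 𝕜 {w}) : x - ⟪w, x⟫_𝕜 • w ∈ N := by
  obtain ⟨y, hy, z, hz, rfl⟩ := mem_sup.1 hx
  obtain ⟨a, rfl⟩ := mem_span_singleton.1 hz
  have hwy : ⟪w, y⟫_𝕜 = 0 := (mem_orthogonal' N w).1 hwN y hy
  rwa [inner_add_right, hwy, inner_smul_right, inner_self_eq_norm_sq_to_K, hw, zero_add,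
    RCLike.ofReal_one, one_pow, mul_one, add_sub_cancel_right]

theorem norm_inv_normSq_smul_sq (s : E) : ‖((‖s‖ ^ 2 : ℝ) : 𝕜)⁻¹ • s‖ ^ 2 = 1 / ‖s‖ ^ 2 := by
  rw [norm_smul, norm_inv, RCLike.norm_ofReal, abs_of_nonneg (by positivity)]
  rcases eq_or_ne ‖s‖ 0 with hs | hs
  · simp [hs]
  · field_simp

theorem starProjection_eq_inv_normSq_smul {S : Submodule 𝕜 E} [S.HasOrthogonalProjection]
    {w s : E} (hsS : s ∈ S) (hs : s ≠ 0)
    (h : ∀ x ∈ S, ⟪s, x⟫_𝕜 = ((‖s‖ ^ 2 : ℝ) : 𝕜) * ⟪w, x⟫_𝕜) :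
    S.starProjection w = ((‖s‖ ^ 2 : ℝ) : 𝕜)⁻¹ • s := by
  have hc : ((‖s‖ ^ 2 : ℝ) : 𝕜) ≠ 0 := by simpa using hs
  refine eq_starProjection_of_mem_of_inner_eq_zero (S.smul_mem _ hsS) fun x hx => ?_
  rw [inner_sub_left, inner_smul_left, h x hx, map_inv₀, RCLike.conj_ofReal,
    inv_mul_cancel_left₀ hc, sub_self]

variable {A : E →ₗ[𝕜] F} {K : Submodule 𝕜 E} {τ : F}

theorem exists_witness_mem_orthogonal [(ker A ⊓ K).HasOrthogonalProjection] {h₀ : E}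
    (h₀K : h₀ ∈ K) (hA : A h₀ = τ) : ∃ s ∈ K, A s = τ ∧ s ∈ (ker A ⊓ K)ᗮ := by
  have hP := starProjection_apply_mem (ker A ⊓ K) h₀
  refine ⟨h₀ - (ker A ⊓ K).starProjection h₀, K.sub_mem h₀K hP.2, ?_,
    sub_starProjection_mem_orthogonal h₀⟩
  rw [map_sub, mem_ker.1 hP.1, sub_zero, hA]

theorem isLeast_witness_normSq {s : E} (hsK : s ∈ K) (hAs : A s = τ)
    (hs : s ∈ (ker A ⊓ K)ᗮ) : IsLeast {r : ℝ | ∃ h ∈ K, A h = τ ∧ r = ‖h‖ ^ 2} (‖s‖ ^ 2) := by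
  refine ⟨⟨s, hsK, hAs, rfl⟩, ?_⟩
  rintro r ⟨h, hK, hAh, rfl⟩
  have hd : h - s ∈ ker A ⊓ K := ⟨by simp [hAh, hAs], K.sub_mem hK hsK⟩
  have hpyth := norm_add_sq_eq_norm_sq_add_norm_sq_of_inner_eq_zero s (h - s)
    ((mem_orthogonal' _ s).1 hs _ hd)
  rw [add_sub_cancel] at hpyth
  nlinarith [mul_self_nonneg ‖h - s‖]

theorem inner_witness_eq_normSq_mul {w₀ s x : E} (hw₀A : w₀ ∈ (ker A)ᗮ) (hw₀ : ‖w₀‖ = 1)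
    (hAw₀ : A w₀ = A s) (hsK : s ∈ K) (hs : s ∈ (ker A ⊓ K)ᗮ)
    (hx : x ∈ (ker A ⊔ span 𝕜 {w₀}) ⊓ K) : ⟪s, x⟫_𝕜 = ((‖s‖ ^ 2 : ℝ) : 𝕜) * ⟪w₀, x⟫_𝕜 := by
  set a := ⟪w₀, x⟫_𝕜
  have hxA : x - a • w₀ ∈ ker A := sub_inner_smul_mem_of_mem_sup_span hw₀A hw₀ hx.1
  have hd : x - a • s ∈ ker A ⊓ K := by
    refine ⟨?_, K.sub_mem hx.2 (K.smul_mem a hsK)⟩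
    have hsplit : x - a • s = (x - a • w₀) + a • (w₀ - s) := by
      rw [smul_sub]; abel
    rw [hsplit]
    exact add_mem hxA (smul_mem _ a (by simp [hAw₀]))
  have horth := (mem_orthogonal' _ s).1 hs _ hd
  rw [inner_sub_right, inner_smul_right, inner_self_eq_norm_sq_to_K, sub_eq_zero] at horth
  rw [horth, mul_comm, RCLike.ofReal_pow]

end

/-- The positive witness size satisfies `‖P_{T ∩ K} w₀‖² = 1/w₊`. -/
theorem stmt15 {H W : Type*}
    [NormedAddCommGroup H] [InnerProductSpace ℂ H] [FiniteDimensional ℂ H]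
    [NormedAddCommGroup W] [InnerProductSpace ℂ W] [FiniteDimensional ℂ W]
    (A : H →ₗ[ℂ] W) (τ : W) (hτ : τ ≠ 0)
    (Ainv : W →ₗ[ℂ] H) (hAinv : IsMPInv A Ainv)
    (w₀ : H) (hw₀ : w₀ = Ainv τ) (hw₀n : ‖w₀‖ = 1)
    (K : Submodule ℂ H) (hK : ∃ h ∈ K, A h = τ)
    (T : Submodule ℂ H) (hT : T = ker A ⊔ Submodule.span ℂ {w₀})
    (wpos : ℝ)
    (hwpos : wpos = sInf {r : ℝ | ∃ h ∈ K, A h = τ ∧ r = ‖h‖ ^ 2}) :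
    ‖projL (T ⊓ K) w₀‖ ^ 2 = 1 / wpos := by
  subst hT hwpos
  obtain ⟨h₀, h₀K, hAh₀⟩ := hK
  have hAw₀ : A w₀ = τ := hw₀ ▸ hAinv.apply_apply_of_mem_range ⟨h₀, hAh₀⟩
  obtain ⟨s, hsK, hAs, hs⟩ := exists_witness_mem_orthogonal h₀K hAh₀
  have hs0 : s ≠ 0 := by
    rintro rfl
    exact hτ (by rw [← hAs, map_zero])
  have hsT : s ∈ ker A ⊔ span ℂ {w₀} :=
    mem_sup.2 ⟨s - w₀, by simp [hAs, hAw₀], w₀, mem_span_singleton_self w₀, sub_add_cancel s w₀⟩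
  have hproj : projL ((ker A ⊔ span ℂ {w₀}) ⊓ K) w₀ = ((‖s‖ ^ 2 : ℝ) : ℂ)⁻¹ • s :=
    starProjection_eq_inv_normSq_smul (mem_inf.2 ⟨hsT, hsK⟩) hs0 fun x hx =>
    inner_witness_eq_normSq_mul (hw₀ ▸ hAinv.apply_mem_orthogonal_ker τ) hw₀n
      (hAw₀.trans hAs.symm) hsK hs hx
  rw [(isLeast_witness_normSq hsK hAs hs).csInf_eq, hproj]
  exact norm_inv_normSq_smul_sq s
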